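/- Let B ∈ F₂^{κ×ν} and ℓ ≥ 1, and let A ∈ F₂^{ℓκ × (ℓ+1)ν} be the block matrix whose (i,i) block is B and whose (i, i+1) block is B̄ for i = 1, …, ℓ, with all other blocks zero. If every nonzero vector x ∈ F₂^κ satisfies wt(x·B) ≥ d, then every nonzero vector y ∈ F₂^{ℓκ} satisfies wt(y·A) ≥ d. In particular, if d ≥ 1 (equivalently, if x ↦ x·B is injective), then y ↦ y·A is injective, so the code generated by A has exactly 2^{ℓκ} codewords. -/

import Mathlib

/-!
If `y ≠ 0`, let `i₀` be the first row block in which `y` is nonzero and `x` that block. In column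
block `i₀` of `y·A` only the diagonal block `B` contributes: the earlier row blocks of `y` vanish,
and the later row blocks of `A` vanish in that column block. Hence this column block of `y·A` is
`x·B`, whose weight is at least `d`.
-/

open Function Matrix

theorem hammingNorm_comp_le_of_injective {α γ β : Type*} [Fintype α] [Fintype γ] [Zero β]
    [DecidableEq β] (x : α → β) {g : γ → α} (hg : Injective g) :
    hammingNorm (x ∘ g) ≤ hammingNorm x :=
  Finset.card_le_card_of_injOn g (fun c hc => by simpa using hc) hg.injOn

theorem Matrix.vecMul_injective_of_forall_ne_zero {m n R : Type*} [Fintype m] [Ring R]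
    {A : Matrix m n R} (h : ∀ y : m → R, y ≠ 0 → y ᵥ* A ≠ 0) : Injective (· ᵥ* A) := by
  intro y₁ y₂ hy
  by_contra hne
  exact h (y₁ - y₂) (sub_ne_zero.2 hne) (by rw [sub_vecMul]; exact sub_eq_zero.2 hy)

section BlockTriangular

variable {ι ι' K N R : Type*} [LinearOrder ι] [Fintype ι] [Fintype K]
  [NonUnitalNonAssocSemiring R]
  {A : Matrix (ι × K) (ι' × N) R} {B : Matrix K N R} {e : ι → ι'}

theorem Matrix.vecMul_apply_of_blockTriangular
    (hlow : ∀ i j k n, j < i → A (i, k) (e j, n) = 0) (hdiag : ∀ i k n, A (i, k) (e i, n) = B k n)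
    {y : ι × K → R} {i₀ : ι} (hy : ∀ i < i₀, ∀ k, y (i, k) = 0) (n : N) :
    (y ᵥ* A) (e i₀, n) = ((fun k => y (i₀, k)) ᵥ* B) n := by
  simp only [vecMul, dotProduct, Fintype.sum_prod_type]
  rw [Finset.sum_eq_single i₀]
  · simp only [hdiag]
  · intro i _ hi
    refine Finset.sum_eq_zero fun k _ => ?_
    rcases hi.lt_or_gt with hlt | hgt
    · rw [hy i hlt k, zero_mul]
    · rw [hlow i i₀ k n hgt, mul_zero]
  · simp

theorem Matrix.le_hammingNorm_vecMul_of_blockTriangular [Fintype N] [Fintype ι'] [DecidableEq R]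
    (hlow : ∀ i j k n, j < i → A (i, k) (e j, n) = 0) (hdiag : ∀ i k n, A (i, k) (e i, n) = B k n)
    {d : ℕ} (hB : ∀ x : K → R, x ≠ 0 → d ≤ hammingNorm (x ᵥ* B)) (y : ι × K → R) (hy : y ≠ 0) :
    d ≤ hammingNorm (y ᵥ* A) := by
  obtain ⟨p, hp⟩ := Function.ne_iff.1 hy
  obtain ⟨i₀, ⟨k₀, hk₀⟩, hmin⟩ :=
    wellFounded_lt.has_min {i | ∃ k, y (i, k) ≠ 0} ⟨p.1, p.2, hp⟩
  have hy_below : ∀ i < i₀, ∀ k, y (i, k) = 0 := fun i hi k => by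
    by_contra hk
    exact hmin i ⟨k, hk⟩ hi
  have hslice : (y ᵥ* A) ∘ (fun n => (e i₀, n)) = (fun k => y (i₀, k)) ᵥ* B :=
    funext (vecMul_apply_of_blockTriangular hlow hdiag hy_below)
  calc d ≤ hammingNorm ((fun k => y (i₀, k)) ᵥ* B) :=
        hB _ (Function.ne_iff.2 ⟨k₀, hk₀⟩)
    _ = hammingNorm ((y ᵥ* A) ∘ (fun n => (e i₀, n))) := by rw [hslice]
    _ ≤ hammingNorm (y ᵥ* A) :=
        hammingNorm_comp_le_of_injective _ fun n n' h => (Prod.mk.inj h).2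

end BlockTriangular

theorem block_matrix_min_distance_general (κ ν ℓ d : ℕ)
    (B : Matrix (Fin κ) (Fin ν) (ZMod 2))
    (A : Matrix (Fin ℓ × Fin κ) (Fin (ℓ + 1) × Fin ν) (ZMod 2))
    (hA : ∀ p q, A p q =
      if (q.1 : ℕ) = (p.1 : ℕ) then B p.2 q.2
      else if (q.1 : ℕ) = (p.1 : ℕ) + 1 then B p.2 q.2 + 1 else 0)
    (hB : ∀ x : Fin κ → ZMod 2, x ≠ 0 →
      d ≤ hammingDist (Matrix.vecMul x B) (0 : Fin ν → ZMod 2)) :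
    (∀ y : Fin ℓ × Fin κ → ZMod 2, y ≠ 0 →
      d ≤ hammingDist (Matrix.vecMul y A) (0 : Fin (ℓ + 1) × Fin ν → ZMod 2)) ∧
    (1 ≤ d →
      Function.Injective (fun y : Fin ℓ × Fin κ → ZMod 2 => Matrix.vecMul y A) ∧
      (Finset.univ.image (fun y : Fin ℓ × Fin κ → ZMod 2 => Matrix.vecMul y A)).card =
        2 ^ (ℓ * κ)) := by
  simp only [hammingDist_zero_right] at hB ⊢
  have hlow : ∀ i j k n, j < i → A (i, k) (Fin.castSucc j, n) = 0 := fun i j k n hji => by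
    have hji_val : (j : ℕ) < i := hji
    simp only [hA, Fin.val_castSucc]
    rw [if_neg (by omega), if_neg (by omega)]
  have hdiag : ∀ i k n, A (i, k) (Fin.castSucc i, n) = B k n := fun i k n => by
    simp only [hA, Fin.val_castSucc, if_true]
  have hdist := le_hammingNorm_vecMul_of_blockTriangular hlow hdiag hB
  refine ⟨hdist, fun hd => ?_⟩
  have hinj : Injective fun y : Fin ℓ × Fin κ → ZMod 2 => y ᵥ* A :=
    vecMul_injective_of_forall_ne_zero fun y hy =>
      hammingNorm_pos_iff.1 (hd.trans (hdist y hy))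
  refine ⟨hinj, ?_⟩
  rw [Finset.card_image_of_injective _ hinj]
  simp [Fintype.card_prod]

/-- **The staircase block matrix preserves the minimum distance.**
Let `B ∈ F₂^{κ×ν}` and `ℓ ≥ 1`, and let `A ∈ F₂^{ℓκ×(ℓ+1)ν}` be the block matrix
(rows indexed by `Fin ℓ × Fin κ`, columns by `Fin (ℓ+1) × Fin ν`) whose `(i,i)` block is
`B` and whose `(i,i+1)` block is the bitwise complement `B̄`, all other blocks being zero.
If every nonzero `x ∈ F₂^κ` satisfies `wt(x·B) ≥ d`, then every nonzero `y ∈ F₂^{ℓκ}`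
satisfies `wt(y·A) ≥ d`.  In particular, if `d ≥ 1` then `y ↦ y·A` is injective, so the
code generated by `A` has exactly `2^{ℓκ}` codewords. -/
theorem block_matrix_min_distance (κ ν ℓ d : ℕ) (hℓ : 1 ≤ ℓ)
    (B : Matrix (Fin κ) (Fin ν) (ZMod 2))
    (A : Matrix (Fin ℓ × Fin κ) (Fin (ℓ + 1) × Fin ν) (ZMod 2))
    (hA : ∀ p q, A p q =
      if (q.1 : ℕ) = (p.1 : ℕ) then B p.2 q.2
      else if (q.1 : ℕ) = (p.1 : ℕ) + 1 then B p.2 q.2 + 1 else 0)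
    (hB : ∀ x : Fin κ → ZMod 2, x ≠ 0 →
      d ≤ hammingDist (Matrix.vecMul x B) (0 : Fin ν → ZMod 2)) :
    (∀ y : Fin ℓ × Fin κ → ZMod 2, y ≠ 0 →
      d ≤ hammingDist (Matrix.vecMul y A) (0 : Fin (ℓ + 1) × Fin ν → ZMod 2)) ∧
    (1 ≤ d →
      Function.Injective (fun y : Fin ℓ × Fin κ → ZMod 2 => Matrix.vecMul y A) ∧
      (Finset.univ.image (fun y : Fin ℓ × Fin κ → ZMod 2 => Matrix.vecMul y A)).card =
        2 ^ (ℓ * κ)) :=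
  block_matrix_min_distance_general κ ν ℓ d B A hA hB
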